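/- For all real θ₁, θ₂, the following identity of 2×2 complex matrices holds: e^{i(θ₁/2 + θ₂/2)² Z} · X · e^{i(θ₁/2)² Z} · e^{i(θ₂/2)² Z} · X = e^{i(θ₁θ₂/2) Z}. Hence a rotation by the product of two phases can be obtained from three squared-phase rotations and two Pauli-X conjugations. -/

import Mathlib

open Matrix

/-- `e^{iαZ}` for the Pauli-Z matrix. -/
noncomputable def eiZ (α : ℝ) : Matrix (Fin 2) (Fin 2) ℂ :=
  NormedSpace.exp ((Complex.I * α) • (!![1, 0; 0, -1] : Matrix (Fin 2) (Fin 2) ℂ))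

/-- The Pauli-X matrix. -/
noncomputable def PauliX : Matrix (Fin 2) (Fin 2) ℂ := !![0, 1; 1, 0]

lemma eiZ_eq (α : ℝ) :
    eiZ α = !![Complex.exp (Complex.I * α), 0; 0, Complex.exp (-(Complex.I * α))] := by
  have h : (Complex.I * α) • (!![1, 0; 0, -1] : Matrix (Fin 2) (Fin 2) ℂ)
      = diagonal ![Complex.I * α, -(Complex.I * α)] := by
    ext i j
    fin_cases i <;> fin_cases j <;> simp [diagonal, Matrix.smul_apply] <;> ring
  rw [eiZ, h, Matrix.exp_diagonal]
  ext i j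
  fin_cases i <;> fin_cases j <;>
    simp [diagonal, Pi.exp_def, ← Complex.exp_eq_exp_ℂ]

/-- Multiplication of phases via squaring:
`e^{i(θ₁/2+θ₂/2)²Z} · X · e^{i(θ₁/2)²Z} · e^{i(θ₂/2)²Z} · X = e^{i(θ₁θ₂/2)Z}`. -/
theorem phase_multiplication (θ₁ θ₂ : ℝ) :
    eiZ ((θ₁ / 2 + θ₂ / 2) ^ 2) * PauliX * eiZ ((θ₁ / 2) ^ 2) * eiZ ((θ₂ / 2) ^ 2) * PauliX
      = eiZ (θ₁ * θ₂ / 2) := by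
  rw [eiZ_eq, eiZ_eq, eiZ_eq, eiZ_eq, PauliX]
  ext i j
  fin_cases i <;> fin_cases j <;>
    simp [Matrix.mul_apply, Fin.sum_univ_two, ← Complex.exp_add] <;>
    · congr 1
      push_cast
      ring
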